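/- For any ideal I on ω and countable ordinal α ≥ 1: conv_{1+α} is not below I in the Katětov order if and only if the ordinal space ω^α + 1 belongs to FinBW(I), i.e., for every sequence (x_n) in ω^α+1 there is A ∉ I such that (x_n)_{n∈A} converges. -/

import Mathlib

open Set Filter Topology Ordinal

noncomputable section

/-- The derived set of `A`: the set of accumulation (limit) points of `A`. -/
def derivSet {X : Type*} [TopologicalSpace X] (A : Set X) : Set X :=
  {p | p ∈ closure (A \ {p})}

/-- The ordinal space `ω^a + 1 = [0, ω^a]` with the (order) topology. -/
abbrev OrdSpace (a : Ordinal) : Type _ := ↥(Set.Iic (omega0 ^ a))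

/-- The ideal `conv_a` on `ω^a + 1`: sets with finite derived set. -/
def convIdeal (a : Ordinal) : Set (Set (OrdSpace a)) :=
  {A | (derivSet A).Finite}

/-- `I` is an ideal of subsets. -/
structure IsIdeal {S : Type*} (I : Set (Set S)) : Prop where
  empty_mem : ∅ ∈ I
  subset_mem : ∀ {A B : Set S}, A ⊆ B → B ∈ I → A ∈ I
  union_mem : ∀ {A B : Set S}, A ∈ I → B ∈ I → A ∪ B ∈ I

/-- The subsequence of `f` indexed by `A` converges to `x`. -/
def ConvAlong {X : Type*} [TopologicalSpace X] (f : ℕ → X) (A : Set ℕ) (x : X) : Prop :=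
  ∀ U ∈ nhds x, {n ∈ A | f n ∉ U}.Finite

/-- Katětov order: `J ≤_K I`, where `I` lives on `X` and `J` on `Y`. -/
def KatetovLE {X Y : Type*} (J : Set (Set Y)) (I : Set (Set X)) : Prop :=
  ∃ f : X → Y, ∀ A ∈ J, f ⁻¹' A ∈ I

/-- `X ∈ FinBW(I)`: every sequence in `X` has a convergent subsequence indexed
by an `I`-positive set. -/
def InFinBW (I : Set (Set ℕ)) (X : Type*) [TopologicalSpace X] : Prop :=
  ∀ f : ℕ → X, ∃ A : Set ℕ, A ∉ I ∧ ∃ x : X, ConvAlong f A x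

/-!
Write `ω ^ (1 + a) = ω * ω ^ a`, so that `ω ^ (1 + a) + 1` is made of blocks `[ω * x, ω * (x + 1))`
indexed by `x ≤ ω ^ a`, the block of `p` being `p / ω`. If `f` witnesses
`conv_{1+a} ≤_K I`, then along any set where the block indices `f n / ω` converge to `x`, the
values of `f` can only accumulate at `ω * x` and `ω * (x + 1)`; so that set is in `I`.
Conversely, a sequence `g` without `I`-positive convergent subsequences is spread out
injectively as `n ↦ ω * g n + n`. By compactness it suffices to control preimages near each
point `p`, where a set with finitely many accumulation points converges to `p`; the block
indices of an injective sequence converging to `p` from the left converge to the left limit of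
`· / ω` at `p`, so the preimage is in `I`.
-/

lemma derivSet_eq_derivedSet {X : Type*} [TopologicalSpace X] (A : Set X) :
    derivSet A = derivedSet A := by
  ext p
  rw [mem_derivedSet, accPt_principal_iff_clusterPt, ← mem_closure_iff_clusterPt]
  rfl

lemma convAlong_iff_tendsto {X : Type*} [TopologicalSpace X] {f : ℕ → X} {A : Set ℕ} {x : X} :
    ConvAlong f A x ↔ Tendsto f (cofinite ⊓ 𝓟 A) (𝓝 x) := by
  refine forall₂_congr fun U _ => ?_
  rw [mem_map, mem_inf_principal, mem_cofinite, compl_ofPred]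
  simp only [Classical.not_imp]
  rfl

lemma convAlong_of_finite {X : Type*} [TopologicalSpace X] (f : ℕ → X) {A : Set ℕ}
    (hA : A.Finite) (x : X) : ConvAlong f A x :=
  fun _ _ => hA.subset fun _ hn => hn.1

lemma convAlong_of_forall_eq {X : Type*} [TopologicalSpace X] {f : ℕ → X} {A : Set ℕ} {x : X}
    (h : ∀ n ∈ A, f n = x) : ConvAlong f A x := by
  intro U hU
  convert Set.finite_empty
  exact eq_empty_of_forall_notMem fun n hn => hn.2 (h n hn.1 ▸ mem_of_mem_nhds hU)

lemma tendsto_of_injective_of_mapsTo {X : Type*} [TopologicalSpace X] {F : ℕ → X}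
    (hF : Function.Injective F) {A : Set ℕ} {S : Set X} (hAS : MapsTo F A S) {p : X}
    (hS : ∀ U ∈ 𝓝 p, (S \ U).Finite) : Tendsto F (cofinite ⊓ 𝓟 A) (𝓝 p) := by
  intro U hU
  rw [mem_map, mem_inf_principal, mem_cofinite]
  refine ((hS U hU).preimage hF.injOn).subset fun n hn => ?_
  simp only [mem_compl_iff, mem_ofPred_eq, Classical.not_imp] at hn
  exact ⟨hAS hn.1, hn.2⟩

lemma exists_mem_nhds_finite_diff_of_finite_derivedSet {X : Type*} [TopologicalSpace X]
    [CompactSpace X] [T2Space X] {B : Set X} (hB : (derivedSet B).Finite) (p : X) :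
    ∃ W ∈ 𝓝 p, ∀ V ∈ 𝓝 p, ((B ∩ W) \ V).Finite := by
  have hU : (derivedSet B \ {p})ᶜ ∈ 𝓝 p :=
    (hB.sdiff.isClosed.isOpen_compl).mem_nhds fun h => h.2 rfl
  obtain ⟨W, hW, hWc, hWU⟩ := exists_mem_nhds_isClosed_subset hU
  refine ⟨W, hW, fun V hV => ?_⟩
  by_contra hinf
  obtain ⟨e, he⟩ := Set.Infinite.exists_accPt_principal
    (Set.Infinite.mono (sdiff_subset_sdiff_right interior_subset) hinf)
  have heB : e ∈ derivedSet B := derivedSet_mono _ _ (fun z hz => hz.1.1) he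
  have hsub : (B ∩ W) \ interior V ⊆ W ∩ (interior V)ᶜ := fun z hz => ⟨hz.1.2, hz.2⟩
  have hcl : e ∈ W ∩ (interior V)ᶜ :=
    closure_minimal hsub (hWc.inter isOpen_interior.isClosed_compl)
      (derivedSet_subset_closure _ he)
  have hep : e = p := by_contra fun hne => hWU hcl.1 ⟨heB, hne⟩
  exact hcl.2 (hep ▸ mem_interior_iff_mem_nhds.mpr hV)

namespace IsIdeal

variable {S : Type*} {I : Set (Set S)}

lemma biUnion_finset_mem {ι : Type*} (hI : IsIdeal I) (t : Finset ι) {A : ι → Set S}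
    (h : ∀ i ∈ t, A i ∈ I) : (⋃ i ∈ t, A i) ∈ I := by
  classical
  induction t using Finset.induction_on with
  | empty => simpa using hI.empty_mem
  | insert i t _ ih =>
    rw [Finset.set_biUnion_insert]
    exact hI.union_mem (h i (Finset.mem_insert_self i t))
      (ih fun j hj => h j (Finset.mem_insert_of_mem hj))

lemma mem_of_forall_exists_nhds {Y : Type*} [TopologicalSpace Y] [CompactSpace Y]
    (hI : IsIdeal I) (f : S → Y) {T : Set S} (h : ∀ p, ∃ W ∈ 𝓝 p, T ∩ f ⁻¹' W ∈ I) : T ∈ I := by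
  choose W hW hWI using h
  obtain ⟨t, -, hcover⟩ := isCompact_univ.elim_nhds_subcover W fun p _ => hW p
  refine hI.subset_mem (fun n hn => ?_) (hI.biUnion_finset_mem t fun p _ => hWI p)
  obtain ⟨p, hp, hfp⟩ := mem_iUnion₂.mp (hcover (mem_univ (f n)))
  exact mem_biUnion hp ⟨hn, hfp⟩

end IsIdeal

instance compactSpace_Iic {α : Type*} [Preorder α] [OrderBot α] [TopologicalSpace α]
    [CompactIccSpace α] (c : α) : CompactSpace (Iic c) :=
  isCompact_iff_compactSpace.mp (Icc_bot (a := c) ▸ isCompact_Icc)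

lemma Iio_succ_mem_nhds {α : Type*} [LinearOrder α] [TopologicalSpace α] [OrderTopology α]
    [SuccOrder α] [NoMaxOrder α] (p : α) : Iio (Order.succ p) ∈ 𝓝 p :=
  isOpen_Iio.mem_nhds (Order.lt_succ p)

namespace Ordinal

lemma omega0_opow_one_add (a : Ordinal) : ω ^ (1 + a) = ω * ω ^ a := by
  rw [opow_add, opow_one]

lemma eq_omega0_mul_of_accPt_image {F : ℕ → Ordinal} {A : Set ℕ} {x p : Ordinal}
    (hconv : ∀ U ∈ 𝓝 x, {n ∈ A | F n / ω ∉ U}.Finite) (hp : AccPt p (𝓟 (F '' A))) :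
    p = ω * x ∨ p = ω * Order.succ x := by
  have separate : ∀ V ∈ 𝓝 p, ∀ U ∈ 𝓝 x, (∀ n, F n ∈ V → F n / ω ∉ U) → False := by
    intro V hV U hU hVU
    refine Set.Infinite.of_accPt (hp.nhds_inter hV) (((hconv U hU).image F).subset ?_)
    rintro _ ⟨hV, n, hn, rfl⟩
    exact ⟨n, ⟨hn, hVU n hV⟩, rfl⟩
  have hp_eq : ω * (p / ω) = p := by
    have := div_add_mod p ω
    rwa [mod_eq_zero_of_dvd (isSuccPrelimit_iff_omega0_dvd.mp hp.isSuccLimit.isSuccPrelimit),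
      add_zero] at this
  have hle : p / ω ≤ Order.succ x := by
    by_contra! h
    refine separate (Ioi (ω * Order.succ x)) (isOpen_Ioi.mem_nhds ?_) _ (Iio_succ_mem_nhds x)
      fun n hn hlt => ?_
    · rw [← hp_eq]
      exact (mul_lt_mul_iff_right₀ omega0_pos).mpr h
    · exact lt_asymm hn ((lt_mul_iff_div_lt omega0_ne_zero).mpr hlt)
  have hge : x ≤ p / ω := by
    by_contra! h
    refine separate _ (Iio_succ_mem_nhds p) (Ioi (p / ω)) (isOpen_Ioi.mem_nhds h)
      fun n hn hlt => ?_
    exact (not_le.mpr hlt) (div_le_left (Order.lt_succ_iff.mp hn) ω)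
  rcases Order.le_succ_iff_eq_or_le.mp hle with h | h
  · exact Or.inr (hp_eq ▸ h ▸ rfl)
  · exact Or.inl (hp_eq ▸ le_antisymm h hge ▸ rfl)


lemma omega0_mul_add_natCast_div (x : Ordinal) (n : ℕ) : (ω * x + n) / ω = x := by
  rw [mul_add_div _ omega0_ne_zero, div_eq_zero_of_lt (natCast_lt_omega0 n), add_zero]

lemma injective_omega0_mul_add_natCast (x : ℕ → Ordinal) :
    Function.Injective fun n : ℕ => ω * x n + n := by
  intro n m h
  have := congrArg (· % ω) h
  simpa only [mul_add_mod_self, mod_eq_of_lt (natCast_lt_omega0 _), Nat.cast_inj] using this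

end Ordinal

theorem not_inFinBW_of_katetovLE {I : Set (Set ℕ)} (hI : IsIdeal I) {a : Ordinal}
    (hK : KatetovLE (convIdeal (1 + a)) I) : ¬ InFinBW I (OrdSpace a) := by
  obtain ⟨f, hf⟩ := hK
  intro hF
  have hblock : ∀ n, (f n : Ordinal) / ω ≤ ω ^ a := fun n =>
    div_le_of_le_mul ((f n).2.trans (omega0_opow_one_add a).le)
  obtain ⟨A, hA, x, hx⟩ := hF fun n => ⟨(f n : Ordinal) / ω, hblock n⟩
  have hconv : ∀ U ∈ 𝓝 (x : Ordinal), {n ∈ A | (f n : Ordinal) / ω ∉ U}.Finite :=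
    fun U hU => hx _ (continuous_subtype_val.continuousAt.preimage_mem_nhds hU)
  have hderiv :
      derivSet (f '' A) ⊆ Subtype.val ⁻¹' {ω * (x : Ordinal), ω * Order.succ (x : Ordinal)} := by
    intro p hp
    rw [derivSet_eq_derivedSet, mem_derivedSet] at hp
    have hp' := hp.map continuous_subtype_val.continuousAt Subtype.val_injective
    rw [map_principal, ← image_comp] at hp'
    exact eq_omega0_mul_of_accPt_image hconv hp'
  have hfA : f '' A ∈ convIdeal (1 + a) :=
    ((toFinite _).preimage Subtype.val_injective.injOn).subset hderiv
  exact hA (hI.subset_mem (subset_preimage_image f A) (hf _ hfA))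

section SpreadBlocks

variable {a : Ordinal} (g : ℕ → OrdSpace a)

/-- The summand `n` makes this injective below the top block, so that sets converging in
`ω ^ (1 + a) + 1` pull back to convergent subsequences of `g`. -/
def spreadBlocks (n : ℕ) : OrdSpace (1 + a) :=
  projIic _ (ω * g n + n)

variable {g}

lemma val_spreadBlocks_of_lt {n : ℕ} (h : (g n : Ordinal) < ω ^ a) :
    (spreadBlocks g n : Ordinal) = ω * g n + n := by
  refine min_eq_right (le_of_lt ?_)
  rw [omega0_opow_one_add, lt_mul_iff_div_lt omega0_ne_zero, omega0_mul_add_natCast_div]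
  exact h

variable {I : Set (Set ℕ)}

lemma mem_of_spreadBlocks_mem_of_lt (hg : ∀ A x, ConvAlong g A x → A ∈ I)
    {S : Set (OrdSpace (1 + a))} {p : OrdSpace (1 + a)} (hS : ∀ V ∈ 𝓝 p, (S \ V).Finite) {A : Set ℕ}
    (hA : ∀ n ∈ A, (g n : Ordinal) < ω ^ a ∧ spreadBlocks g n ∈ S ∧ ω * (g n : Ordinal) + n < p) :
    A ∈ I := by
  set F : ℕ → Ordinal := fun n => ω * g n + n
  have hS' : ∀ U ∈ 𝓝 (p : Ordinal), (Subtype.val '' S \ U).Finite := fun U hU => by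
    rw [← image_sdiff_preimage]
    exact (hS _ (continuous_subtype_val.continuousAt.preimage_mem_nhds hU)).image _
  have hmaps : MapsTo F A (Subtype.val '' S) := fun n hn =>
    ⟨_, (hA n hn).2.1, val_spreadBlocks_of_lt (hA n hn).1⟩
  have hFp : Tendsto F (cofinite ⊓ 𝓟 A) (𝓝[<] (p : Ordinal)) :=
    tendsto_nhdsWithin_iff.mpr
      ⟨tendsto_of_injective_of_mapsTo (injective_omega0_mul_add_natCast _) hmaps hS',
        eventually_inf_principal.mpr (Eventually.of_forall fun n hn => (hA n hn).2.2)⟩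
  have hq : sSup ((· / ω) '' Iio (p : Ordinal)) ≤ ω ^ a := by
    refine csSup_le' ?_
    rintro _ ⟨y, hy, rfl⟩
    exact div_le_of_le_mul (hy.le.trans (p.2.trans (omega0_opow_one_add a).le))
  -- `· / ω` is monotone, hence has a left limit at `p`: no case split on the form of `p`
  have hlim := (Monotone.tendsto_nhdsLT (fun _ _ h => div_le_left h ω) _).comp hFp
  simp only [Function.comp_def, F, omega0_mul_add_natCast_div] at hlim
  exact hg A ⟨_, hq⟩ (convAlong_iff_tendsto.mpr (tendsto_subtype_rng.mpr hlim))

lemma exists_nhds_preimage_spreadBlocks_inter_mem (hg : ∀ A x, ConvAlong g A x → A ∈ I)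
    (hI : IsIdeal I) {B : Set (OrdSpace (1 + a))} (hB : (derivedSet B).Finite)
    (p : OrdSpace (1 + a)) :
    ∃ W ∈ 𝓝 p, spreadBlocks g ⁻¹' B ∩ spreadBlocks g ⁻¹' W ∈ I := by
  obtain ⟨W, hW, hWB⟩ := exists_mem_nhds_finite_diff_of_finite_derivedSet hB p
  have hV : Subtype.val ⁻¹' Iio (Order.succ (p : Ordinal)) ∈ 𝓝 p :=
    continuous_subtype_val.continuousAt.preimage_mem_nhds (Iio_succ_mem_nhds _)
  refine ⟨W ∩ Subtype.val ⁻¹' Iio (Order.succ (p : Ordinal)), inter_mem hW hV, ?_⟩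
  have htop : {n | (g n : Ordinal) = ω ^ a} ∈ I :=
    hg _ ⟨ω ^ a, self_mem_Iic⟩ (convAlong_of_forall_eq fun n hn => Subtype.ext hn)
  have hfiber : {n | ω * (g n : Ordinal) + n = p} ∈ I := by
    refine hg _ (g 0) (convAlong_of_finite g (Subsingleton.finite ?_) (g 0))
    exact fun n hn m hm => injective_omega0_mul_add_natCast (fun n => (g n : Ordinal))
      ((hn : _ = _).trans (hm : _ = _).symm)
  have hrest := mem_of_spreadBlocks_mem_of_lt hg hWB (A := {n | (g n : Ordinal) < ω ^ a ∧
    spreadBlocks g n ∈ B ∩ W ∧ ω * (g n : Ordinal) + n < p}) fun _ hn => hn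
  refine hI.subset_mem (fun n ⟨hnB, hnW, hnV⟩ => ?_)
    (hI.union_mem (hI.union_mem htop hfiber) hrest)
  by_cases hlt : (g n : Ordinal) < ω ^ a
  · have hle : ω * (g n : Ordinal) + n ≤ p :=
      (val_spreadBlocks_of_lt hlt).symm.trans_le (Order.lt_succ_iff.mp hnV)
    rcases hle.eq_or_lt with heq | hFp
    · exact Or.inl (Or.inr heq)
    · exact Or.inr ⟨hlt, ⟨hnB, hnW⟩, hFp⟩
  · exact Or.inl (Or.inl (le_antisymm (g n).2 (not_lt.mp hlt)))

end SpreadBlocks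

theorem katetovLE_of_not_inFinBW {I : Set (Set ℕ)} (hI : IsIdeal I) {a : Ordinal}
    (hNF : ¬ InFinBW I (OrdSpace a)) : KatetovLE (convIdeal (1 + a)) I := by
  simp only [InFinBW, not_forall, not_exists, not_and] at hNF
  obtain ⟨g, hg⟩ := hNF
  refine ⟨spreadBlocks g, fun B hB => hI.mem_of_forall_exists_nhds (spreadBlocks g) fun p => ?_⟩
  rw [convIdeal, mem_ofPred_eq, derivSet_eq_derivedSet] at hB
  exact exists_nhds_preimage_spreadBlocks_inter_mem
    (fun A x h => by_contra fun hA => hg A hA x h) hI hB p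

theorem stmt9_general (I : Set (Set ℕ)) (hI : IsIdeal I)
    (a : Ordinal) :
    ¬ KatetovLE (convIdeal (1 + a)) I ↔ InFinBW I (OrdSpace a) :=
  ⟨not_imp_comm.mp (katetovLE_of_not_inFinBW hI), fun hF hK => not_inFinBW_of_katetovLE hI hK hF⟩

/-- For any ideal `I` on `ω` and countable `α ≥ 1`:
`conv_{1+α} ≰_K I` iff `ω^α + 1 ∈ FinBW(I)`. -/
theorem stmt9 (I : Set (Set ℕ)) (hI : IsIdeal I)
    (a : Ordinal) (ha : 1 ≤ a) (hac : a.card ≤ Cardinal.aleph0) :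
    ¬ KatetovLE (convIdeal (1 + a)) I ↔ InFinBW I (OrdSpace a) :=
  stmt9_general I hI a
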